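/- Fix finite nonempty sets Θ, Ω, A, a utility function u : Θ × Ω × A → ℝ, and a probability distribution μ on Ω × Θ with μ(ω) > 0 for all ω. Then for every valid Pricing Outcomes menu with revenue R, there exists a valid Pricing Outcomes menu all of whose posteriors lie in the finite set Q*(u,μ) and whose revenue is at least R. -/

import Mathlib

open Finset Filter

noncomputable section

variable {Θ Ω A : Type*}

/-- `p` is a probability distribution on the finite set `Ω`. -/
def IsDist [Fintype Ω] (p : Ω → ℝ) : Prop :=
  (∀ ω, 0 ≤ p ω) ∧ ∑ ω, p ω = 1

/-- `μ` is a joint probability distribution on `Ω × Θ`. -/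
def IsJoint [Fintype Ω] [Fintype Θ] (μ : Ω → Θ → ℝ) : Prop :=
  (∀ ω θ, 0 ≤ μ ω θ) ∧ ∑ ω, ∑ θ, μ ω θ = 1

/-- The marginal `μ(ω) = ∑_θ μ(ω,θ)` of a joint distribution. -/
def margO [Fintype Θ] (μ : Ω → Θ → ℝ) (ω : Ω) : ℝ := ∑ θ, μ ω θ

/-- The marginal `μ(θ) = ∑_ω μ(ω,θ)` of a joint distribution. -/
def margT [Fintype Ω] (μ : Ω → Θ → ℝ) (θ : Θ) : ℝ := ∑ ω, μ ω θ

/-- The value function `v_θ(q) = max_{a ∈ A} ∑_ω q(ω)·u(θ,ω,a)`. -/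
def vfun [Fintype Ω] [Fintype A] [Nonempty A] (u : Θ → Ω → A → ℝ) (θ : Θ) (q : Ω → ℝ) : ℝ :=
  univ.sup' univ_nonempty fun a => ∑ ω, q ω * u θ ω a

/-- The matrix-vector product `D_θ q`, where `D_θ` is the diagonal matrix with entries
`μ(θ|ω) = μ(ω,θ)/μ(ω)`. -/
def Dq [Fintype Θ] (μ : Ω → Θ → ℝ) (θ : Θ) (q : Ω → ℝ) : Ω → ℝ :=
  fun ω => μ ω θ / margO μ ω * q ω

/-- `1ᵀ D_θ q`. -/
def onesD [Fintype Θ] [Fintype Ω] (μ : Ω → Θ → ℝ) (θ : Θ) (q : Ω → ℝ) : ℝ :=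
  ∑ ω, Dq μ θ q ω

/-- A feasible signal-representation for prior `pr`: a finitely supported distribution over
posteriors (each posterior being a distribution on `Ω`) averaging to the prior. -/
def FeasRep [Fintype Ω] (pr : Ω → ℝ) (x : (Ω → ℝ) →₀ ℝ) : Prop :=
  (∀ q ∈ x.support, IsDist q) ∧ (∀ q, 0 ≤ x q) ∧
  (∑ q ∈ x.support, x q = 1) ∧ ∀ ω, ∑ q ∈ x.support, x q * q ω = pr ω

variable [Fintype Θ] [Fintype Ω] [Fintype A] [Nonempty A]

/-- Expected value `∑_q v_θ(D_θ q)·x(q)` that a type-`θ` buyer gets from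
signal representation `x`. -/
def PMutil (u : Θ → Ω → A → ℝ) (μ : Ω → Θ → ℝ) (θ : Θ) (x : (Ω → ℝ) →₀ ℝ) : ℝ :=
  ∑ q ∈ x.support, vfun u θ (Dq μ θ q) * x q

/-- Validity (IR and IC) of a Pricing Mappings menu `{(x_θ, t_θ)}`. -/
def PMvalid (u : Θ → Ω → A → ℝ) (μ : Ω → Θ → ℝ)
    (x : Θ → ((Ω → ℝ) →₀ ℝ)) (t : Θ → ℝ) : Prop :=
  (∀ θ, FeasRep (margO μ) (x θ)) ∧ (∀ θ, 0 ≤ t θ) ∧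
  (∀ θ, vfun u θ (Dq μ θ (margO μ)) ≤ PMutil u μ θ (x θ) - margT μ θ * t θ) ∧
  (∀ θ θ', θ' ≠ θ →
    PMutil u μ θ (x θ') - margT μ θ * t θ' ≤ PMutil u μ θ (x θ) - margT μ θ * t θ)

/-- Revenue `∑_θ μ(θ)·t_θ` of a Pricing Mappings menu. -/
def PMrev (μ : Ω → Θ → ℝ) (t : Θ → ℝ) : ℝ := ∑ θ, margT μ θ * t θ

/-- `R_c(u,μ)`: the supremum of revenues of valid Pricing Mappings menus. -/
def Rc (u : Θ → Ω → A → ℝ) (μ : Ω → Θ → ℝ) : ℝ :=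
  sSup {r | ∃ x t, PMvalid u μ x t ∧ r = PMrev μ t}

/-- Net utility `∑_q [v_θ(D_θ q)·x(q) − (1ᵀD_θ q)·t̃(q)]` of a type-`θ` buyer
from a Pricing Outcomes contract `(x, tt)`. -/
def POutil (u : Θ → Ω → A → ℝ) (μ : Ω → Θ → ℝ) (θ : Θ)
    (x tt : (Ω → ℝ) →₀ ℝ) : ℝ :=
  ∑ q ∈ x.support ∪ tt.support,
    (vfun u θ (Dq μ θ q) * x q - onesD μ θ q * tt q)

/-- Validity (feasibility, payments supported on signals, IR and IC) of a Pricing Outcomes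
menu `{(x_θ, t̃_θ)}`. -/
def POvalid (u : Θ → Ω → A → ℝ) (μ : Ω → Θ → ℝ)
    (x tt : Θ → ((Ω → ℝ) →₀ ℝ)) : Prop :=
  (∀ θ, FeasRep (margO μ) (x θ)) ∧ (∀ θ, (tt θ).support ⊆ (x θ).support) ∧
  (∀ θ, vfun u θ (Dq μ θ (margO μ)) ≤ POutil u μ θ (x θ) (tt θ)) ∧
  (∀ θ θ', θ' ≠ θ →
    POutil u μ θ (x θ') (tt θ') ≤ POutil u μ θ (x θ) (tt θ))

/-- Revenue `∑_θ ∑_q (1ᵀD_θ q)·t̃_θ(q)` of a Pricing Outcomes menu. -/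
def POrev (μ : Ω → Θ → ℝ) (tt : Θ → ((Ω → ℝ) →₀ ℝ)) : ℝ :=
  ∑ θ, ∑ q ∈ (tt θ).support, onesD μ θ q * tt θ q

/-- `R(u,μ)`: the supremum of revenues of valid Pricing Outcomes menus. -/
def Rfull (u : Θ → Ω → A → ℝ) (μ : Ω → Θ → ℝ) : ℝ :=
  sSup {r | ∃ x tt, POvalid u μ x tt ∧ r = POrev μ tt}

/-- `R_p(u,μ)`: the supremum of revenues of valid Pricing Outcomes menus with no positive
transfers to the buyer, i.e. all payments nonnegative. -/
def Rp (u : Θ → Ω → A → ℝ) (μ : Ω → Θ → ℝ) : ℝ :=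
  sSup {r | ∃ x tt, POvalid u μ x tt ∧ (∀ θ q, 0 ≤ tt θ q) ∧ r = POrev μ tt}

/-- `max_a u(θ,ω,a)`. -/
def maxU (u : Θ → Ω → A → ℝ) (θ : Θ) (ω : Ω) : ℝ :=
  univ.sup' univ_nonempty fun a => u θ ω a

/-- The buyer surplus
`σ(θ) = ∑_ω μ(ω|θ)·max_a u(θ,ω,a) − max_a ∑_ω μ(ω|θ)·u(θ,ω,a)`. -/
def surplus (u : Θ → Ω → A → ℝ) (μ : Ω → Θ → ℝ) (θ : Θ) : ℝ :=
  ∑ ω, μ ω θ / margT μ θ * maxU u θ ω -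
    univ.sup' univ_nonempty fun a => ∑ ω, μ ω θ / margT μ θ * u θ ω a

/-- The full surplus `∑_θ μ(θ)·σ(θ)`. -/
def fullSurplus (u : Θ → Ω → A → ℝ) (μ : Ω → Θ → ℝ) : ℝ :=
  ∑ θ, margT μ θ * surplus u μ θ

/-- The sealed-envelope revenue `R_e(u,μ) = sup_{t ≥ 0} t·∑_{θ : μ(θ)>0, σ(θ) ≥ t} μ(θ)`. -/
def Re (u : Θ → Ω → A → ℝ) (μ : Ω → Θ → ℝ) : ℝ :=
  sSup {r | ∃ t : ℝ, 0 ≤ t ∧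
    r = t * ∑ θ, (if 0 < margT μ θ ∧ t ≤ surplus u μ θ then margT μ θ else 0)}

/-- The cell of the simplex on which, for each type `θ`, action `α θ` is optimal:
on this polytope every `v_θ` is linear. -/
def cellPM (u : Θ → Ω → A → ℝ) (α : Θ → A) : Set (Ω → ℝ) :=
  {q | IsDist q ∧ ∀ θ a, ∑ ω, q ω * u θ ω a ≤ ∑ ω, q ω * u θ ω (α θ)}

/-- `Q*(u)`: the set of vertices (extreme points) of the cells of the partition of the simplex
into polytopes on which every `v_θ` is linear. -/
def Qstar (u : Θ → Ω → A → ℝ) : Set (Ω → ℝ) :=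
  ⋃ α : Θ → A, Set.extremePoints ℝ (cellPM u α)

/-- The cell of the simplex on which, for each type `θ`, action `α θ` is optimal for the
transformed posterior `D_θ q`: on this polytope every `q ↦ v_θ(D_θ q)` is linear. -/
def cellPO (u : Θ → Ω → A → ℝ) (μ : Ω → Θ → ℝ) (α : Θ → A) : Set (Ω → ℝ) :=
  {q | IsDist q ∧ ∀ θ a, ∑ ω, Dq μ θ q ω * u θ ω a ≤ ∑ ω, Dq μ θ q ω * u θ ω (α θ)}

/-- `Q*(u,μ)`: the set of vertices (extreme points) of the cells of the partition of the simplex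
into polytopes on which every `q ↦ v_θ(D_θ q)` is linear. -/
def QstarD (u : Θ → Ω → A → ℝ) (μ : Ω → Θ → ℝ) : Set (Ω → ℝ) :=
  ⋃ α : Θ → A, Set.extremePoints ℝ (cellPO u μ α)

/-- The point mass at `ω`, as an element of `Δ(Ω)`. -/
def deltaP [DecidableEq Ω] (ω : Ω) : Ω → ℝ := fun ω' => if ω' = ω then 1 else 0

/-- The full-revelation signal representation: posterior `δ_ω` with probability `μ(ω)`. -/
def fullX [DecidableEq Ω] (μ : Ω → Θ → ℝ) : (Ω → ℝ) →₀ ℝ :=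
  ∑ ω, Finsupp.single (deltaP ω) (margO μ ω)

/-- The full-revelation payment function: `t̃(δ_ω) = μ(ω)·t(ω)`. -/
def fullT [DecidableEq Ω] (μ : Ω → Θ → ℝ) (t : Ω → ℝ) : (Ω → ℝ) →₀ ℝ :=
  ∑ ω, Finsupp.single (deltaP ω) (margO μ ω * t ω)

open Topology
open Finsupp (linearCombination)

/-!
Every posterior `q` lies in a cell `cellPO u μ α` of the simplex, obtained by fixing for each
type an action optimal at `D_θ q`. The cell is a polytope on which every `q ↦ v_θ(D_θ q)` is
linear, and its vertices belong to `Q*(u,μ)`. Replacing each posterior of a menu by the vertices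
of its cell, weighted by a convex combination representing it, keeps every signal representation
feasible and, by linearity on the cell and of `q ↦ 1ᵀD_θ q`, leaves every type's value of every
contract and every expected payment unchanged; so IR, IC and the revenue survive. `Q*(u,μ)` is
finite because an extreme point of a polyhedron is determined by its set of active constraints.
-/

section Polyhedron

variable {E ι : Type*} [AddCommGroup E] [Module ℝ E]

def polyhedron (f : ι → E →ₗ[ℝ] ℝ) (b : ι → ℝ) : Set E := {z | ∀ i, f i z ≤ b i}

variable {f : ι → E →ₗ[ℝ] ℝ} {b : ι → ℝ}

theorem convex_polyhedron : Convex ℝ (polyhedron f b) := by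
  simpa only [polyhedron, Set.ofPred_forall] using
    convex_iInter fun i => convex_halfSpace_le (f i).isLinear (b i)

theorem isClosed_polyhedron [TopologicalSpace E] [IsTopologicalAddGroup E] [ContinuousSMul ℝ E]
    [T2Space E] [FiniteDimensional ℝ E] : IsClosed (polyhedron f b) := by
  simpa only [polyhedron, Set.ofPred_forall] using
    isClosed_iInter fun i => isClosed_le (f i).continuous_of_finiteDimensional continuous_const

/-- `x` lies strictly between `y` and `x + ε • (x - y)`, which stays in the polyhedron for small
`ε > 0` since the constraints active at `x` stay tight along the line. -/
theorem eq_of_mem_extremePoints_polyhedron [Finite ι] {x y : E}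
    (hx : x ∈ (polyhedron f b).extremePoints ℝ) (hy : y ∈ polyhedron f b)
    (hact : ∀ i, f i x = b i → f i y = b i) : y = x := by
  have hline : ∀ i (ε : ℝ), f i (x + ε • (x - y)) = f i x + ε * (f i x - f i y) := by
    intro i ε
    rw [map_add, map_smul, map_sub, smul_eq_mul]
  have hnear : ∀ i, ∀ᶠ ε : ℝ in 𝓝[>] 0, f i (x + ε • (x - y)) ≤ b i := by
    intro i
    rcases (hx.1 i).eq_or_lt with hxi | hxi
    · filter_upwards with ε
      rw [hline, hxi, hact i hxi, sub_self, mul_zero, add_zero]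
    · have hlim :
          Tendsto (fun ε : ℝ => f i x + ε * (f i x - f i y)) (𝓝[>] 0) (𝓝 (f i x)) := by
        have := ((tendsto_id (x := 𝓝 (0 : ℝ))).mul_const (f i x - f i y)).const_add (f i x)
        simpa using this.mono_left nhdsWithin_le_nhds
      filter_upwards [hlim.eventually_le_const hxi] with ε hε
      rwa [hline]
  obtain ⟨ε, hεP, hε⟩ := ((eventually_all.2 hnear).and self_mem_nhdsWithin).exists
  have hseg : x ∈ openSegment ℝ y (x + ε • (x - y)) := by
    have h1ε : (0 : ℝ) < 1 + ε := by linarith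
    refine ⟨ε / (1 + ε), 1 / (1 + ε), by positivity, by positivity, by field_simp; ring, ?_⟩
    match_scalars
    · field_simp; ring
    · field_simp
  exact hx.2 hy hεP hseg

theorem finite_extremePoints_polyhedron [Finite ι] :
    ((polyhedron f b).extremePoints ℝ).Finite := by
  refine Set.Finite.of_finite_image (f := fun x => {i | f i x = b i}) (Set.toFinite _) ?_
  intro x hx y hy hxy
  exact eq_of_mem_extremePoints_polyhedron hy hx.1 fun i hi => (Set.ext_iff.1 hxy i).2 hi

end Polyhedron

namespace Finsupp

variable {α β R : Type*}

theorem linearCombination_indicator {M : Type*} [Semiring R] [AddCommMonoid M] [Module R M]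
    (s : Finset α) (w : α → R) (g : α → M) :
    linearCombination R g (indicator s fun y _ => w y) = ∑ y ∈ s, w y • g y := by
  rw [linearCombination_apply, sum_indicator_index w fun y _ => zero_smul R (g y)]

theorem linearCombination_linearCombination_of_forall_mem_support [Semiring R] {M : Type*}
    [AddCommMonoid M] [Module R M] {g : α → M} {s : α → α →₀ R} {x : α →₀ R}
    (h : ∀ q ∈ x.support, linearCombination R g (s q) = g q) :
    linearCombination R g (linearCombination R s x) =
      linearCombination R g x := by
  rw [linearCombination_linearCombination, linearCombination_apply,
    linearCombination_apply]
  exact sum_congr fun q hq => by rw [h q hq]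

theorem linearCombination_apply_apply [Semiring R] (s : α → β →₀ R) (x : α →₀ R)
    (e : β) :
    linearCombination R s x e = ∑ q ∈ x.support, x q * s q e := by
  simp [linearCombination_apply, sum]

theorem support_linearCombination_subset [Semiring R] [DecidableEq β] (s : α → β →₀ R)
    (x : α →₀ R) :
    (linearCombination R s x).support ⊆ x.support.biUnion fun q => (s q).support :=
  support_sum.trans <| Finset.biUnion_mono fun _ _ => support_smul

variable [Field R] [LinearOrder R] [IsStrictOrderedRing R]
variable {s : α → β →₀ R} {x : α →₀ R}

theorem linearCombination_nonneg (hx : ∀ q, 0 ≤ x q)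
    (hs : ∀ q ∈ x.support, ∀ e, 0 ≤ s q e) (e : β) : 0 ≤ linearCombination R s x e := by
  rw [linearCombination_apply_apply]
  exact Finset.sum_nonneg fun q hq => mul_nonneg (hx q) (hs q hq e)

theorem support_linearCombination_subset_of_nonneg {t : α →₀ R} (ht : t.support ⊆ x.support)
    (hx : ∀ q, 0 ≤ x q) (hs : ∀ q ∈ x.support, ∀ e, 0 ≤ s q e) :
    (linearCombination R s t).support ⊆ (linearCombination R s x).support := by
  classical
  intro e he
  obtain ⟨q, hqt, hqe⟩ := Finset.mem_biUnion.1 (support_linearCombination_subset s t he)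
  have hq := ht hqt
  have hpos : 0 < x q * s q e :=
    mul_pos ((hx q).lt_of_ne' (mem_support_iff.1 hq))
      ((hs q hq e).lt_of_ne' (mem_support_iff.1 hqe))
  rw [mem_support_iff, linearCombination_apply_apply]
  exact (hpos.trans_le (Finset.single_le_sum (f := fun q => x q * s q e)
    (fun q' hq' => mul_nonneg (hx q') (hs q' hq' e)) hq)).ne'

end Finsupp

theorem convexHull_extremePoints_eq_of_finite {E : Type*} [AddCommGroup E] [Module ℝ E]
    [TopologicalSpace E] [T2Space E] [IsTopologicalAddGroup E] [ContinuousSMul ℝ E]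
    [LocallyConvexSpace ℝ E] {s : Set E} (hcomp : IsCompact s) (hconv : Convex ℝ s)
    (hfin : (s.extremePoints ℝ).Finite) : convexHull ℝ (s.extremePoints ℝ) = s := by
  rw [← (hfin.isClosed_convexHull ℝ).closure_eq, closure_convexHull_extremePoints hcomp hconv]

theorem exists_finsupp_of_mem_convexHull {E : Type*} [AddCommGroup E] [Module ℝ E]
    {s : Finset E} {x : E} (hx : x ∈ convexHull ℝ (s : Set E)) :
    ∃ w : E →₀ ℝ, (∀ y, 0 ≤ w y) ∧ w.support ⊆ s ∧
      linearCombination ℝ (1 : E → ℝ) w = 1 ∧ linearCombination ℝ id w = x := by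
  classical
  obtain ⟨w, hw0, hw1, hwx⟩ := Finset.mem_convexHull'.1 hx
  refine ⟨Finsupp.indicator s fun y _ => w y, fun y => ?_, Finsupp.support_indicator_subset _ _,
    by simpa [Finsupp.linearCombination_indicator] using hw1,
    by rwa [Finsupp.linearCombination_indicator]⟩
  rw [Finsupp.indicator_apply]
  split_ifs with hy
  exacts [hw0 y hy, le_rfl]


section FeasRep

variable {p : Ω → ℝ} {x : (Ω → ℝ) →₀ ℝ}

theorem feasRep_iff : FeasRep p x ↔ (∀ q ∈ x.support, IsDist q) ∧ (∀ q, 0 ≤ x q) ∧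
    linearCombination ℝ (1 : (Ω → ℝ) → ℝ) x = 1 ∧
      linearCombination ℝ id x = p := by
  simp only [FeasRep, Finsupp.linearCombination_apply, Finsupp.sum, funext_iff,
    Finset.sum_apply, Pi.smul_apply, Pi.one_apply, smul_eq_mul, mul_one, id]

theorem FeasRep.linearCombination_eq (h : FeasRep p x) (L : Module.Dual ℝ (Ω → ℝ)) :
    linearCombination ℝ L x = L p := by
  rw [← Finsupp.apply_linearCombination_id, (feasRep_iff.1 h).2.2.2]

theorem FeasRep.bind {s : (Ω → ℝ) → (Ω → ℝ) →₀ ℝ} (hx : FeasRep p x)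
    (hs : ∀ q ∈ x.support, FeasRep q (s q)) : FeasRep p (linearCombination ℝ s x) := by
  classical
  obtain ⟨hdist, hnonneg, hone, hbary⟩ := feasRep_iff.1 hx
  refine feasRep_iff.2 ⟨fun e he => ?_, Finsupp.linearCombination_nonneg hnonneg
    fun q hq => (feasRep_iff.1 (hs q hq)).2.1, ?_, ?_⟩
  · obtain ⟨q, hq, he⟩ :=
      Finset.mem_biUnion.1 (Finsupp.support_linearCombination_subset s x he)
    exact (hs q hq).1 e he
  · rw [Finsupp.linearCombination_linearCombination_of_forall_mem_support
      fun q hq => (feasRep_iff.1 (hs q hq)).2.2.1, hone]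
  · rw [Finsupp.linearCombination_linearCombination_of_forall_mem_support
      fun q hq => (feasRep_iff.1 (hs q hq)).2.2.2, hbary]

end FeasRep

section Cell

variable (u : Θ → Ω → A → ℝ) (μ : Ω → Θ → ℝ)

def dotD (θ : Θ) (c : Ω → ℝ) : Module.Dual ℝ (Ω → ℝ) :=
  Fintype.linearCombination ℝ c ∘ₗ LinearMap.mulLeft ℝ fun ω => μ ω θ / margO μ ω

variable {u μ}

theorem dotD_apply (θ : Θ) (c q : Ω → ℝ) : dotD μ θ c q = ∑ ω, Dq μ θ q ω * c ω :=
  rfl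

theorem onesD_eq_dotD (θ : Θ) : onesD μ θ = dotD μ θ 1 := by
  ext q
  simp [onesD, dotD_apply]

theorem exists_mem_cellPO {q : Ω → ℝ} (hq : IsDist q) : ∃ α, q ∈ cellPO u μ α := by
  choose α hα using fun θ =>
    Finset.exists_max_image univ (fun a => dotD μ θ (u θ · a) q) univ_nonempty
  exact ⟨α, hq, fun θ a => (hα θ).2 a (mem_univ a)⟩

theorem vfun_Dq_of_mem_cellPO {α : Θ → A} {q : Ω → ℝ} (hq : q ∈ cellPO u μ α)
    (θ : Θ) :
    vfun u θ (Dq μ θ q) = dotD μ θ (u θ · (α θ)) q :=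
  le_antisymm (Finset.sup'_le _ _ fun a _ => hq.2 θ a)
    (Finset.le_sup' (fun a => dotD μ θ (u θ · a) q) (mem_univ (α θ)))

variable (u μ)

def cellConstraint (α : Θ → A) : Ω ⊕ Bool ⊕ Θ × A → Module.Dual ℝ (Ω → ℝ)
  | .inl ω => -LinearMap.proj ω
  | .inr (.inl true) => Fintype.linearCombination ℝ 1
  | .inr (.inl false) => -Fintype.linearCombination ℝ 1
  | .inr (.inr (θ, a)) => dotD μ θ (u θ · a) - dotD μ θ (u θ · (α θ))

def cellBound : Ω ⊕ Bool ⊕ Θ × A → ℝ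
  | .inr (.inl true) => 1
  | .inr (.inl false) => -1
  | _ => 0

omit [Fintype A] [Nonempty A] in
theorem cellPO_eq_polyhedron (α : Θ → A) :
    cellPO u μ α = polyhedron (cellConstraint u μ α) cellBound := by
  ext q
  simp only [cellPO, polyhedron, IsDist, Set.mem_ofPred_eq, Sum.forall, Bool.forall_bool,
    Prod.forall, cellConstraint, cellBound, LinearMap.neg_apply, LinearMap.proj_apply,
    Fintype.linearCombination_apply, Pi.one_apply, smul_eq_mul, mul_one, LinearMap.sub_apply,
    sub_nonpos, neg_nonpos, neg_le_neg_iff, dotD_apply]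
  exact ⟨fun ⟨⟨h0, h1⟩, h2⟩ => ⟨h0, ⟨h1.ge, h1.le⟩, h2⟩,
    fun ⟨h0, ⟨h1, h1'⟩, h2⟩ => ⟨⟨h0, le_antisymm h1' h1⟩, h2⟩⟩

omit [Nonempty A] in
theorem finite_extremePoints_cellPO (α : Θ → A) :
    ((cellPO u μ α).extremePoints ℝ).Finite := by
  rw [cellPO_eq_polyhedron]
  exact finite_extremePoints_polyhedron

omit [Fintype A] [Nonempty A] in
theorem isCompact_cellPO (α : Θ → A) : IsCompact (cellPO u μ α) :=
  (isCompact_stdSimplex ℝ Ω).of_isClosed_subset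
    (cellPO_eq_polyhedron u μ α ▸ isClosed_polyhedron) fun _ hq => hq.1

omit [Fintype A] [Nonempty A] in
theorem convex_cellPO (α : Θ → A) : Convex ℝ (cellPO u μ α) :=
  cellPO_eq_polyhedron u μ α ▸ convex_polyhedron

omit [Nonempty A] in
theorem QstarD_finite : (QstarD u μ).Finite :=
  Set.finite_iUnion (finite_extremePoints_cellPO u μ)

end Cell

section Menu

def IsValueSplit (u : Θ → Ω → A → ℝ) (μ : Ω → Θ → ℝ) (q : Ω → ℝ) (w : (Ω → ℝ) →₀ ℝ) :
    Prop :=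
  FeasRep q w ∧ ∀ θ, linearCombination ℝ (fun e => vfun u θ (Dq μ θ e)) w = vfun u θ (Dq μ θ q)

variable {u : Θ → Ω → A → ℝ} {μ : Ω → Θ → ℝ}

/-- Split `q` into the vertices of a cell containing it: every `v_θ ∘ D_θ` is linear there. -/
theorem exists_isValueSplit_of_isDist {q : Ω → ℝ} (hq : IsDist q) :
    ∃ w, IsValueSplit u μ q w ∧ ↑w.support ⊆ QstarD u μ := by
  obtain ⟨α, hqα⟩ := exists_mem_cellPO (u := u) (μ := μ) hq
  have hfin := finite_extremePoints_cellPO u μ α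
  have hhull : q ∈ convexHull ℝ (hfin.toFinset : Set (Ω → ℝ)) := by
    rwa [hfin.coe_toFinset, convexHull_extremePoints_eq_of_finite (isCompact_cellPO u μ α)
      (convex_cellPO u μ α) hfin]
  obtain ⟨w, hw0, hwsupp, hw1, hwq⟩ := exists_finsupp_of_mem_convexHull hhull
  have hcell : ∀ e ∈ w.support, e ∈ (cellPO u μ α).extremePoints ℝ := fun e he =>
    hfin.mem_toFinset.1 (hwsupp he)
  have hw : FeasRep q w := feasRep_iff.2 ⟨fun e he => (hcell e he).1.1, hw0, hw1, hwq⟩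
  refine ⟨w, ⟨hw, fun θ => ?_⟩, fun e he => Set.mem_iUnion.2 ⟨α, hcell e he⟩⟩
  calc linearCombination ℝ (fun e => vfun u θ (Dq μ θ e)) w
      = linearCombination ℝ (dotD μ θ (u θ · (α θ))) w := by
        rw [Finsupp.linearCombination_apply, Finsupp.linearCombination_apply]
        exact Finsupp.sum_congr fun e he => by rw [vfun_Dq_of_mem_cellPO (hcell e he).1]
    _ = vfun u θ (Dq μ θ q) := by
        rw [hw.linearCombination_eq, vfun_Dq_of_mem_cellPO hqα]

theorem exists_forall_isValueSplit (u : Θ → Ω → A → ℝ) (μ : Ω → Θ → ℝ) :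
    ∃ s : (Ω → ℝ) → (Ω → ℝ) →₀ ℝ,
      ∀ q, IsDist q → IsValueSplit u μ q (s q) ∧ ↑(s q).support ⊆ QstarD u μ := by
  classical
  have h {q : Ω → ℝ} (hq : IsDist q) := exists_isValueSplit_of_isDist (u := u) (μ := μ) hq
  refine ⟨fun q => if hq : IsDist q then (h hq).choose else 0, fun q hq => ?_⟩
  simpa only [dif_pos hq] using (h hq).choose_spec

theorem POutil_eq_linearCombination (θ : Θ) (x tt : (Ω → ℝ) →₀ ℝ) :
    POutil u μ θ x tt = linearCombination ℝ (fun q => vfun u θ (Dq μ θ q)) x -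
      linearCombination ℝ (onesD μ θ) tt := by
  classical
  have hx : x.support ⊆ x.support ∪ tt.support := Finset.subset_union_left
  have htt : tt.support ⊆ x.support ∪ tt.support := Finset.subset_union_right
  rw [POutil, Finset.sum_sub_distrib, Finsupp.linearCombination_apply,
    Finsupp.linearCombination_apply,
    Finsupp.sum_of_support_subset x hx (fun q a => a • vfun u θ (Dq μ θ q))
      fun _ _ => zero_smul ℝ _,
    Finsupp.sum_of_support_subset tt htt (fun q a => a • onesD μ θ q)
      fun _ _ => zero_smul ℝ _]
  simp only [smul_eq_mul, mul_comm]

theorem POrev_eq_sum_linearCombination (tt : Θ → (Ω → ℝ) →₀ ℝ) :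
    POrev μ tt = ∑ θ, linearCombination ℝ (onesD μ θ) (tt θ) := by
  simp only [POrev, Finsupp.linearCombination_apply, Finsupp.sum, smul_eq_mul, mul_comm]

variable {x tt : (Ω → ℝ) →₀ ℝ} {s : (Ω → ℝ) → (Ω → ℝ) →₀ ℝ}

theorem linearCombination_onesD_bind (θ : Θ) (htt : tt.support ⊆ x.support)
    (hs : ∀ q ∈ x.support, FeasRep q (s q)) :
    linearCombination ℝ (onesD μ θ) (linearCombination ℝ s tt) =
      linearCombination ℝ (onesD μ θ) tt := by
  refine Finsupp.linearCombination_linearCombination_of_forall_mem_support fun q hq => ?_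
  rw [onesD_eq_dotD, (hs q (htt hq)).linearCombination_eq]

theorem POutil_bind (θ : Θ) (htt : tt.support ⊆ x.support)
    (hs : ∀ q ∈ x.support, IsValueSplit u μ q (s q)) :
    POutil u μ θ (linearCombination ℝ s x) (linearCombination ℝ s tt) =
      POutil u μ θ x tt := by
  rw [POutil_eq_linearCombination, POutil_eq_linearCombination,
    linearCombination_onesD_bind θ htt fun q hq => (hs q hq).1,
    Finsupp.linearCombination_linearCombination_of_forall_mem_support fun q hq => (hs q hq).2 θ]

variable {x tt : Θ → (Ω → ℝ) →₀ ℝ}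

theorem POvalid.bind (h : POvalid u μ x tt)
    (hs : ∀ θ, ∀ q ∈ (x θ).support, IsValueSplit u μ q (s q)) :
    POvalid u μ (fun θ => linearCombination ℝ s (x θ))
      (fun θ => linearCombination ℝ s (tt θ)) := by
  obtain ⟨hfeas, hsupp, hIR, hIC⟩ := h
  have hutil : ∀ θ θ', POutil u μ θ (linearCombination ℝ s (x θ'))
      (linearCombination ℝ s (tt θ')) = POutil u μ θ (x θ') (tt θ') :=
    fun θ θ' => POutil_bind θ (hsupp θ') (hs θ')
  refine ⟨fun θ => (hfeas θ).bind fun q hq => (hs θ q hq).1, fun θ => ?_,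
    fun θ => by simpa only [hutil] using hIR θ,
    fun θ θ' hne => by simpa only [hutil] using hIC θ θ' hne⟩
  exact Finsupp.support_linearCombination_subset_of_nonneg (hsupp θ) (hfeas θ).2.1
    fun q hq => (feasRep_iff.1 (hs θ q hq).1).2.1

theorem POrev_bind (hsupp : ∀ θ, (tt θ).support ⊆ (x θ).support)
    (hs : ∀ θ, ∀ q ∈ (x θ).support, FeasRep q (s q)) :
    POrev μ (fun θ => linearCombination ℝ s (tt θ)) = POrev μ tt := by
  simp only [POrev_eq_sum_linearCombination, linearCombination_onesD_bind _ (hsupp _) (hs _)]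

end Menu

theorem interesting_posteriors_correlated_general (u : Θ → Ω → A → ℝ) (μ : Ω → Θ → ℝ) :
    (QstarD u μ).Finite ∧
    ∀ x tt, POvalid u μ x tt →
      ∃ x' tt', POvalid u μ x' tt' ∧
        (∀ θ, ∀ q ∈ (x' θ).support, q ∈ QstarD u μ) ∧
        POrev μ tt ≤ POrev μ tt' := by
  classical
  refine ⟨QstarD_finite u μ, fun x tt hval => ?_⟩
  obtain ⟨s, hs⟩ := exists_forall_isValueSplit u μ
  have hsplit : ∀ θ, ∀ q ∈ (x θ).support,
      IsValueSplit u μ q (s q) ∧ ↑(s q).support ⊆ QstarD u μ :=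
    fun θ q hq => hs q ((hval.1 θ).1 q hq)
  refine ⟨_, _, hval.bind fun θ q hq => (hsplit θ q hq).1, fun θ e he => ?_,
    (POrev_bind hval.2.1 fun θ q hq => (hsplit θ q hq).1.1).ge⟩
  obtain ⟨q, hq, he⟩ :=
    Finset.mem_biUnion.1 (Finsupp.support_linearCombination_subset s (x θ) he)
  exact (hsplit θ q hq).2 he

/-- Interesting posteriors, correlated case. For any joint distribution `μ`
with positive `Ω`-marginal, `Q*(u,μ)` is a finite set and any valid Pricing Outcomes menu can
be replaced by a valid Pricing Outcomes menu whose posteriors all lie in `Q*(u,μ)` with at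
least the same revenue. -/
theorem interesting_posteriors_correlated (u : Θ → Ω → A → ℝ) (μ : Ω → Θ → ℝ)
    (hμ : IsJoint μ) (hO : ∀ ω, 0 < margO μ ω) :
    (QstarD u μ).Finite ∧
    ∀ x tt, POvalid u μ x tt →
      ∃ x' tt', POvalid u μ x' tt' ∧
        (∀ θ, ∀ q ∈ (x' θ).support, q ∈ QstarD u μ) ∧
        POrev μ tt ≤ POrev μ tt' :=
  interesting_posteriors_correlated_general u μ
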